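/- arXiv:2002.00715 — 2 statements merged into one kernel-verified Lean document; each statement's English description precedes it below -/
import Mathlib

section
/- In the total complex of the $n$-fold Loday complex $\mathcal{L}^{\mathbb{Q}}_{T^n}(\mathbb{Q}[t];\mathbb{Q})$, if $\mathbf{v}$ and $\mathbf{w}$ are coordinates of multidegree $\mathbf{1}_n$ that are both $0$ in the $i$-th place for some $i$, then the cycle $x_{\mathbf{v}} \cdot y_{\mathbf{w}}$ is null-homologous. In particular $x_{\mathbf{v}} \sim 0$ whenever $\mathbf{v} \neq \mathbf{1}_n$. -/
/-!
The multisimplicial Loday complex `𝓛^ℚ_{Tⁿ}(ℚ[t]; ℚ)` of the `n`-torus with reduced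
coefficients, in the multidegrees needed for the moving lemmas.

A chain in multidegree `𝟏ₙ + eᵢ`-or-lower is a `ℚ`-linear combination of monomial
multi-matrices with entries powers of `t` (entry `ℚ` at the basepoint coordinate `𝟎ₙ`);
such a monomial is recorded by its exponent multi-matrix, a finitely supported function
`e : (Fin n → ℕ) → ℕ` (the exponent of `t` at each coordinate) with `e 𝟎 = 0`.  Chains
form the monoid algebra `Ch n` of these exponent matrices (multiplication of monomials
adds exponents coordinatewise, matching multiplication of multi-matrices).  `elem v x` is
the multi-matrix `x_𝐯` with `x ∈ ℚ[t]` at coordinate `𝐯` and `1` elsewhere (so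
`elem 𝟎 t = 0`: `t` acts as `0` on the coefficient copy of `ℚ`).  `D i j` is the `j`-th
face map of the simplicial circle in the `i`-th direction (for circle-degree `2 → 1`),
`del i = D i 0 - D i 1 + D i 2` the corresponding differential, `Deg b` the chains of
multidegree (entrywise) at most `b`, and `Homologous x y` says the difference `x - y` is
a boundary coming from total multidegree `n + 1`, i.e. from the multidegrees `𝟏ₙ + eᵢ`
(in the directions `i'` with multidegree `1` the cyclic differentials vanish).
-/

/-- Coordinates of a multi-matrix. -/
abbrev Coord (n : ℕ) := Fin n → ℕ

/-- Exponent multi-matrices: the exponent at the basepoint coordinate `𝟎` is `0`. -/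
noncomputable def ExpM (n : ℕ) : AddSubmonoid ((Coord n) →₀ ℕ) where
  carrier := {e | e 0 = 0}
  add_mem' := by intro a b ha hb; simp_all
  zero_mem' := by simp

/-- Chains of the (reduced-coefficient) multisimplicial Loday complex of `ℚ[t]`. -/
abbrev Ch (n : ℕ) := AddMonoidAlgebra ℚ (ExpM n)

/-- The monomial with a single `t` at coordinate `v` (zero if `v` is the basepoint,
since `t` acts as `0` on the coefficients `ℚ`). -/
noncomputable def tv {n : ℕ} (v : Coord n) : Ch n :=
  if h : v = 0 then 0
  else AddMonoidAlgebra.single ⟨Finsupp.single v 1, Finsupp.single_eq_of_ne (Ne.symm h)⟩ 1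

/-- `elem v x = x_𝐯`: the multi-matrix with `x ∈ ℚ[t]` at coordinate `v`, `1` elsewhere. -/
noncomputable def elem {n : ℕ} (v : Coord n) (x : Polynomial ℚ) : Ch n :=
  Polynomial.aeval (tv v) x

/-- The `j`-th face map of the simplicial circle `S¹` from simplicial degree `2` to
degree `1`, on coordinates `{0,1,2} → {0,1}` (`0` the basepoint). -/
def cface (j c : ℕ) : ℕ := (if 3 ≤ j + c then c - 1 else c) % 2

/-- The `j`-th face in direction `i` on coordinates. -/
def phi {n : ℕ} (i : Fin n) (j : ℕ) (c : Coord n) : Coord n :=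
  Function.update c i (cface j (c i))

/-- Face of a monomial: push exponents forward along `phi i j` (adding exponents that
land at the same coordinate = multiplying the entries over each fiber); if a positive
exponent lands on the basepoint the result is `0` (reduced coefficients). -/
noncomputable def Dsingle {n : ℕ} (i : Fin n) (j : ℕ) (e : ExpM n) : Ch n :=
  if h : (Finsupp.mapDomain (phi i j) (e : Coord n →₀ ℕ)) 0 = 0 then
    AddMonoidAlgebra.single ⟨Finsupp.mapDomain (phi i j) (e : Coord n →₀ ℕ), h⟩ 1
  else 0

/-- The `j`-th face map in direction `i`, extended linearly to chains. -/
noncomputable def D {n : ℕ} (i : Fin n) (j : ℕ) (a : Ch n) : Ch n :=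
  Finsupp.sum a.coeff fun e q => q • Dsingle i j e

/-- The simplicial differential in direction `i` (from multidegree `𝟏ₙ + eᵢ`). -/
noncomputable def del {n : ℕ} (i : Fin n) (a : Ch n) : Ch n :=
  D i 0 a - D i 1 a + D i 2 a

/-- The monomial `e` lies in the box of multidegree `b`. -/
def inBox {n : ℕ} (b : Coord n) (e : ExpM n) : Prop :=
  ∀ c ∈ (e : Coord n →₀ ℕ).support, ∀ i, c i ≤ b i

/-- Chains of multidegree (entrywise at most) `b`. -/
noncomputable def Deg {n : ℕ} (b : Coord n) : Submodule ℚ (Ch n) :=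
  Submodule.span ℚ {x | ∃ e : ExpM n, inBox b e ∧ x = AddMonoidAlgebra.single e 1}

/-- Boundaries in multidegree `𝟏ₙ`: images of the total differential on chains of the
multidegrees `𝟏ₙ + eᵢ` (in directions of multidegree `1` the cyclic differentials
vanish, so the total differential is `± del i` there). -/
noncomputable def bdry (n : ℕ) : Submodule ℚ (Ch n) :=
  Submodule.span ℚ {x | ∃ (i : Fin n) (z : Ch n),
    z ∈ Deg (Function.update (fun _ => 1) i 2) ∧ x = del i z}

/-- Two chains of multidegree `𝟏ₙ` are homologous if their difference is a boundary. -/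
def Homologous {n : ℕ} (x y : Ch n) : Prop := x - y ∈ bdry n

/-!
A chain built only from coordinates whose `i`-th entry is `0` is the image of itself under the
degeneracy `s_{i,0}`: read in multidegree `𝟏ₙ + eᵢ` it avoids the new coordinate `2` in direction
`i`, and all three faces in direction `i` fix it. Hence `del i z = z - z + z = z`, so it is a
boundary. Chains supported on such coordinates form a subalgebra, which contains `x_𝐯` and `y_𝐰`,
hence also `x_𝐯 · y_𝐰`.
-/

theorem cface_zero (j : ℕ) : cface j 0 = 0 := by
  unfold cface
  split_ifs <;> rfl

namespace Ch

variable {n : ℕ}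

noncomputable def supportedOn (S : Set (Coord n)) : Subalgebra ℚ (Ch n) where
  carrier := {z | ∀ e ∈ z.coeff.support, ↑(e : Coord n →₀ ℕ).support ⊆ S}
  mul_mem' := by
    classical
    intro a b ha hb e he
    obtain ⟨p, hp, q, hq, rfl⟩ :=
      Finset.mem_add.mp (AddMonoidAlgebra.support_coeff_mul_subset a b he)
    intro c hc
    rcases Finset.mem_union.mp (Finsupp.support_add (g₁ := (p : Coord n →₀ ℕ)) hc) with h | h
    · exact ha p hp h
    · exact hb q hq h
  add_mem' := by
    intro a b ha hb e he
    rcases Finset.mem_union.mp (Finsupp.support_add he) with h | h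
    · exact ha e h
    · exact hb e h
  algebraMap_mem' := by
    intro r e he
    obtain rfl : e = 0 := by simpa using Finsupp.support_single_subset (by simpa using he)
    simp

theorem supportedOn_mono {S T : Set (Coord n)} (h : S ⊆ T) : supportedOn S ≤ supportedOn T :=
  fun _ hz e he => (hz e he).trans h

theorem tv_mem_supportedOn {S : Set (Coord n)} {v : Coord n} (hv : v ∈ S) :
    tv v ∈ supportedOn S := by
  unfold tv
  split_ifs
  · exact zero_mem _
  · intro e he
    obtain rfl := Finset.mem_singleton.mp (Finsupp.support_single_subset he)
    intro c hc
    obtain rfl := Finset.mem_singleton.mp (Finsupp.support_single_subset hc)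
    exact hv

theorem elem_mem_supportedOn {S : Set (Coord n)} {v : Coord n} (hv : v ∈ S)
    (x : Polynomial ℚ) : elem v x ∈ supportedOn S :=
  Algebra.adjoin_le (Set.singleton_subset_iff.mpr (tv_mem_supportedOn hv))
    (Polynomial.aeval_mem_adjoin_singleton ℚ (tv v) (p := x))

theorem mem_Deg_of_mem_supportedOn {S : Set (Coord n)} {b : Coord n}
    (hS : ∀ c ∈ S, ∀ j, c j ≤ b j) {z : Ch n} (hz : z ∈ supportedOn S) : z ∈ Deg b := by
  rw [← AddMonoidAlgebra.sum_coeff_single z]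
  refine Submodule.finsuppSum_mem _ _ _ _ fun e he => ?_
  rw [← mul_one (z.coeff e), ← AddMonoidAlgebra.smul_single']
  have hbox : inBox b e := fun c hc => hS c (hz e (Finsupp.mem_support_iff.mpr he) hc)
  exact Submodule.smul_mem _ _ (Submodule.subset_span ⟨e, hbox, rfl⟩)

theorem D_eq_self_of_mem_supportedOn {i : Fin n} {z : Ch n}
    (hz : z ∈ supportedOn {c | c i = 0}) (j : ℕ) : D i j z = z := by
  rw [D]
  conv_rhs => rw [← AddMonoidAlgebra.sum_coeff_single z]
  refine Finsupp.sum_congr fun e he => ?_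
  have hmap : Finsupp.mapDomain (phi i j) (e : Coord n →₀ ℕ) = e := by
    have hfix : ∀ c ∈ (e : Coord n →₀ ℕ).support, phi i j c = id c := fun c hc => by
      have hci : c i = 0 := hz e he hc
      simp [phi, hci, cface_zero]
    rw [Finsupp.mapDomain_congr hfix, Finsupp.mapDomain_id]
  have h0 : Finsupp.mapDomain (phi i j) (e : Coord n →₀ ℕ) 0 = 0 := by
    rw [hmap]; exact e.2
  rw [Dsingle, dif_pos h0, show (⟨_, h0⟩ : ExpM n) = e from Subtype.ext hmap,
    AddMonoidAlgebra.smul_single', mul_one]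

theorem del_eq_self_of_mem_supportedOn {i : Fin n} {z : Ch n}
    (hz : z ∈ supportedOn {c | c i = 0}) : del i z = z := by
  simp only [del, D_eq_self_of_mem_supportedOn hz, sub_self, zero_add]

theorem mem_bdry_of_mem_supportedOn {i : Fin n} {z : Ch n}
    (hz : z ∈ supportedOn {c | c i = 0 ∧ ∀ j, c j ≤ 1}) : z ∈ bdry n := by
  have hbox : ∀ c ∈ {c : Coord n | c i = 0 ∧ ∀ j, c j ≤ 1},
      ∀ j, c j ≤ Function.update (fun _ => 1) i 2 j := by
    rintro c ⟨hci, hc⟩ j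
    rcases eq_or_ne j i with rfl | hji
    · simp [hci]
    · simpa [Function.update_of_ne hji] using hc j
  refine Submodule.subset_span ⟨i, z, mem_Deg_of_mem_supportedOn hbox hz, ?_⟩
  exact (del_eq_self_of_mem_supportedOn (supportedOn_mono (fun _ hc => hc.1) hz)).symm

end Ch

theorem vanishing_off_diagonal (n : ℕ) (v w : Coord n)
    (hv : ∀ j, v j ≤ 1) (hw : ∀ j, w j ≤ 1)
    (i : Fin n) (hvi : v i = 0) (hwi : w i = 0) (x y : Polynomial ℚ) :
    Homologous (elem v x * elem w y) 0 ∧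
    ∀ u : Coord n, (∀ j, u j ≤ 1) → u ≠ (fun _ => 1) →
      ∀ x' : Polynomial ℚ, Homologous (elem u x') 0 := by
  have elem_mem : ∀ (k : Fin n) (u : Coord n), u k = 0 → (∀ j, u j ≤ 1) → ∀ p,
      elem u p ∈ Ch.supportedOn {c : Coord n | c k = 0 ∧ ∀ j, c j ≤ 1} :=
    fun _ _ hk hu => Ch.elem_mem_supportedOn ⟨hk, hu⟩
  refine ⟨?_, fun u hu hne x' => ?_⟩
  · rw [Homologous, sub_zero]
    exact Ch.mem_bdry_of_mem_supportedOn <|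
      mul_mem (elem_mem i v hvi hv x) (elem_mem i w hwi hw y)
  · obtain ⟨k, hk⟩ : ∃ k, u k = 0 := by
      by_contra! h
      exact hne (funext fun k => by have := hu k; have := h k; omega)
    rw [Homologous, sub_zero]
    exact Ch.mem_bdry_of_mem_supportedOn (elem_mem k u hk hu x')
end

section
/- In the total complex of $\mathcal{L}^{\mathbb{Q}}_{T^n}(\mathbb{Q}[t];\mathbb{Q})$, for any coordinates $\mathbf{v}, \mathbf{w}$ of multidegree $\mathbf{1}_n$ and any $x, y \in \mathbb{Q}[t]$, one has the homology relation $x_{\mathbf{v}} \cdot y_{\mathbf{w}} \sim \sum x_{\mathbf{v}'} \cdot y_{\mathbf{w}'}$, where the sum runs over all pairs of coordinates $\mathbf{v}' \leq \mathbf{v}$, $\mathbf{w}' \leq \mathbf{w}$ (entrywise) with $\mathbf{v}' + \mathbf{w}' = \mathbf{1}_n$. -/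
/-!
By bilinearity it suffices to take `x = tᵃ`, `y = tᵇ`, so that both sides are sums of monomials,
and we induct on `|𝐯| + |𝐰|`. If `vᵢ = wᵢ = 0` for some direction `i`, every face in direction
`i` fixes the monomial, so it equals its own `del i` and is a boundary; the index set is empty.
If `vᵢ = wᵢ = 1`, the split moving lemma replaces the product by two products of smaller weight,
and the index set splits accordingly by the value of `𝐯'ᵢ`. Otherwise `𝐯 + 𝐰 = 𝟏ₙ` and the sum
has the single term `(𝐯, 𝐰)`.
-/

theorem phi_zero {n : ℕ} (i : Fin n) (j : ℕ) : phi i j 0 = 0 := by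
  simp [phi, cface]

namespace Ch

variable {n : ℕ}

noncomputable def monomial (f : Coord n →₀ ℕ) : Ch n :=
  if h : f 0 = 0 then AddMonoidAlgebra.single ⟨f, h⟩ 1 else 0

theorem monomial_zero : monomial (0 : Coord n →₀ ℕ) = 1 := by
  rw [monomial, dif_pos (Finsupp.zero_apply ..), AddMonoidAlgebra.one_def]
  rfl

theorem monomial_add (f g : Coord n →₀ ℕ) : monomial (f + g) = monomial f * monomial g := by
  unfold monomial
  by_cases hf : f 0 = 0 <;> by_cases hg : g 0 = 0 <;>
    simp [hf, hg, AddMonoidAlgebra.single_mul_single]; rfl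

theorem monomial_pow (f : Coord n →₀ ℕ) (a : ℕ) : monomial f ^ a = monomial (a • f) := by
  induction a with
  | zero => rw [pow_zero, zero_smul, monomial_zero]
  | succ a ih => rw [pow_succ, ih, succ_nsmul, monomial_add]

theorem monomial_mem_Deg {f : Coord n →₀ ℕ} {b : Coord n}
    (hf : ∀ c ∈ f.support, ∀ i, c i ≤ b i) : monomial f ∈ Deg b := by
  unfold monomial
  split_ifs with h
  · exact Submodule.subset_span ⟨⟨f, h⟩, hf, rfl⟩
  · exact Submodule.zero_mem _

/-- Faces fix the basepoint, so they kill the monomials that vanish there. -/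
theorem D_monomial (i : Fin n) (j : ℕ) (f : Coord n →₀ ℕ) :
    D i j (monomial f) = monomial (f.mapDomain (phi i j)) := by
  by_cases hf : f 0 = 0
  · rw [monomial, dif_pos hf]
    exact (Finsupp.sum_single_index (zero_smul ℚ (Dsingle i j ⟨f, hf⟩))).trans (one_smul ℚ _)
  · classical
    have hf' : f.mapDomain (phi i j) 0 ≠ 0 := by
      rw [← Finsupp.mem_support_iff, Finsupp.mapDomain_support_of_subsingletonAddUnits]
      exact Finset.mem_image.2 ⟨0, Finsupp.mem_support_iff.2 hf, phi_zero i j⟩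
    rw [monomial, dif_neg hf, monomial, dif_neg hf']
    exact Finsupp.sum_zero_index

theorem del_monomial (i : Fin n) (f : Coord n →₀ ℕ) :
    del i (monomial f) = monomial (f.mapDomain (phi i 0)) - monomial (f.mapDomain (phi i 1))
      + monomial (f.mapDomain (phi i 2)) := by
  simp only [del, D_monomial]

end Ch

theorem tv_eq_monomial {n : ℕ} (v : Coord n) : tv v = Ch.monomial (Finsupp.single v 1) := by
  unfold tv Ch.monomial
  by_cases hv : v = 0
  · subst hv
    rw [dif_pos rfl, dif_neg (by simp)]
  · rw [dif_neg hv, dif_pos (Finsupp.single_eq_of_ne (Ne.symm hv))]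

theorem elem_X_pow {n : ℕ} (v : Coord n) (a : ℕ) :
    elem v (Polynomial.X ^ a) = Ch.monomial (Finsupp.single v a) := by
  rw [elem, map_pow, Polynomial.aeval_X, tv_eq_monomial, Ch.monomial_pow, Finsupp.smul_single,
    smul_eq_mul, mul_one]

theorem del_mem_bdry {n : ℕ} {i : Fin n} {z : Ch n}
    (hz : z ∈ Deg (Function.update (fun _ => 1) i 2)) : del i z ∈ bdry n :=
  Submodule.subset_span ⟨i, z, hz, rfl⟩

/-- Every face in direction `i` fixes the coordinates with `i`-th entry `0`, so `del i` is the
identity on such monomials. -/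
theorem Ch.monomial_mem_bdry {n : ℕ} {i : Fin n} {f : Coord n →₀ ℕ}
    (hf : ∀ c ∈ f.support, c i = 0 ∧ ∀ j, c j ≤ 1) : Ch.monomial f ∈ bdry n := by
  have hfix : ∀ j, f.mapDomain (phi i j) = f := fun j =>
    (Finsupp.mapDomain_congr fun c hc => by simp [phi, cface, (hf c hc).1]).trans
      Finsupp.mapDomain_id
  have hdel : del i (Ch.monomial f) = Ch.monomial f := by
    rw [Ch.del_monomial, hfix, hfix, hfix, sub_self, zero_add]
  rw [← hdel]
  refine del_mem_bdry (Ch.monomial_mem_Deg fun c hc j => ((hf c hc).2 j).trans ?_)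
  rcases eq_or_ne j i with rfl | hji
  · simp
  · simp [hji]

section ProdClass

open Polynomial

variable {n : ℕ}

theorem Polynomial.bilin_ext_X_pow {R M : Type*} [CommSemiring R] [AddCommMonoid M] [Module R M]
    {f g : R[X] →ₗ[R] R[X] →ₗ[R] M} (h : ∀ a b : ℕ, f (X ^ a) (X ^ b) = g (X ^ a) (X ^ b)) :
    f = g := by
  ext a b
  simpa only [LinearMap.comp_apply, monomial_one_right_eq_X_pow] using h a b

noncomputable def prodClass (v w : Coord n) : ℚ[X] →ₗ[ℚ] ℚ[X] →ₗ[ℚ] Ch n ⧸ bdry n :=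
  ((LinearMap.mul ℚ (Ch n)).compl₁₂ (aeval (tv v)).toLinearMap
    (aeval (tv w)).toLinearMap).compr₂ (bdry n).mkQ

theorem prodClass_apply (v w : Coord n) (x y : ℚ[X]) :
    prodClass v w x y = (bdry n).mkQ (elem v x * elem w y) :=
  rfl

theorem prodClass_X_pow (v w : Coord n) (a b : ℕ) :
    prodClass v w (X ^ a) (X ^ b) =
      (bdry n).mkQ (Ch.monomial (Finsupp.single v a + Finsupp.single w b)) := by
  rw [prodClass_apply, elem_X_pow, elem_X_pow, Ch.monomial_add]

theorem Finsupp.mem_support_single_add_single {α M : Type*} [AddZeroClass M] {v w c : α} {a b : M}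
    (hc : c ∈ (Finsupp.single v a + Finsupp.single w b).support) : c = v ∨ c = w := by
  classical
  rcases Finset.mem_union.1 (Finsupp.support_add hc) with h | h
  · exact Or.inl (Finset.mem_singleton.1 (Finsupp.support_single_subset h))
  · exact Or.inr (Finset.mem_singleton.1 (Finsupp.support_single_subset h))

theorem prodClass_eq_zero {v w : Coord n} {i : Fin n} (hvi : v i = 0) (hwi : w i = 0)
    (hv : ∀ j, v j ≤ 1) (hw : ∀ j, w j ≤ 1) : prodClass v w = 0 := by
  refine Polynomial.bilin_ext_X_pow fun a b => ?_
  rw [prodClass_X_pow, LinearMap.zero_apply, LinearMap.zero_apply, Submodule.mkQ_apply,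
    Submodule.Quotient.mk_eq_zero]
  refine Ch.monomial_mem_bdry (i := i) fun c hc => ?_
  rcases Finsupp.mem_support_single_add_single hc with rfl | rfl
  exacts [⟨hvi, hv⟩, ⟨hwi, hw⟩]

/-- The split moving lemma: it is `del i` of `x` placed at `v` with `i`-th entry raised to `2`,
times `y` at `w`. -/
theorem prodClass_split {v w : Coord n} {i : Fin n} (hvi : v i = 1) (hwi : w i = 1)
    (hv : ∀ j, v j ≤ 1) (hw : ∀ j, w j ≤ 1) :
    prodClass v w = prodClass (Function.update v i 0) w + prodClass v (Function.update w i 0) := by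
  refine Polynomial.bilin_ext_X_pow fun a b => ?_
  set u := Function.update v i 2
  have hv' : Function.update v i 1 = v := by rw [← hvi, Function.update_eq_self]
  have hw' : Function.update w i 1 = w := by rw [← hwi, Function.update_eq_self]
  have hdel : del i (Ch.monomial (Finsupp.single u a + Finsupp.single w b)) =
      Ch.monomial (Finsupp.single (Function.update v i 0) a + Finsupp.single w b)
        - Ch.monomial (Finsupp.single v a + Finsupp.single w b)
        + Ch.monomial (Finsupp.single v a + Finsupp.single (Function.update w i 0) b) := by
    simp [Ch.del_monomial, Finsupp.mapDomain_add, u, phi, cface, hwi, hv', hw']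
  have hu : ∀ c ∈ (Finsupp.single u a + Finsupp.single w b).support, ∀ j,
      c j ≤ Function.update (fun _ => 1) i 2 j := by
    intro c hc j
    rcases Finsupp.mem_support_single_add_single hc with rfl | rfl <;>
      rcases eq_or_ne j i with rfl | hji <;> simp [u, *]
  rw [LinearMap.add_apply, LinearMap.add_apply, prodClass_X_pow, prodClass_X_pow,
    prodClass_X_pow, ← map_add, Submodule.mkQ_apply, Submodule.mkQ_apply, Submodule.Quotient.eq]
  convert Submodule.neg_mem _ (del_mem_bdry (Ch.monomial_mem_Deg hu)) using 1
  rw [hdel]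
  abel

end ProdClass

section AdmissiblePairs

variable {n : ℕ}

def admissiblePairs (v w : Coord n) : Finset ((Fin n → Fin 2) × (Fin n → Fin 2)) :=
  Finset.univ.filter fun p => (∀ j, (p.1 j : ℕ) ≤ v j) ∧ (∀ j, (p.2 j : ℕ) ≤ w j) ∧
    ∀ j, (p.1 j : ℕ) + (p.2 j : ℕ) = 1

theorem mem_admissiblePairs {v w : Coord n} {p : (Fin n → Fin 2) × (Fin n → Fin 2)} :
    p ∈ admissiblePairs v w ↔
      ∀ j, (p.1 j : ℕ) ≤ v j ∧ (p.2 j : ℕ) ≤ w j ∧ (p.1 j : ℕ) + (p.2 j : ℕ) = 1 := by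
  simp only [admissiblePairs, Finset.mem_filter, Finset.mem_univ, true_and, forall_and]

theorem admissiblePairs_eq_empty {v w : Coord n} {i : Fin n} (hvi : v i = 0) (hwi : w i = 0) :
    admissiblePairs v w = ∅ :=
  Finset.eq_empty_of_forall_notMem fun p hp => by
    have := mem_admissiblePairs.1 hp i
    omega

theorem admissiblePairs_eq_singleton {v w : Coord n} (h : ∀ j, v j + w j = 1) :
    admissiblePairs v w =
      {(fun j => ⟨v j, by have := h j; omega⟩, fun j => ⟨w j, by have := h j; omega⟩)} := by
  ext p
  rw [mem_admissiblePairs, Finset.mem_singleton, Prod.ext_iff, funext_iff, funext_iff]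
  refine ⟨fun hp => ⟨fun j => ?_, fun j => ?_⟩, fun ⟨h1, h2⟩ j => ?_⟩
  · have := hp j; have := h j; exact Fin.ext (by simp; omega)
  · have := hp j; have := h j; exact Fin.ext (by simp; omega)
  · rw [h1 j, h2 j]; exact ⟨le_rfl, le_rfl, h j⟩

theorem admissiblePairs_split {v w : Coord n} {i : Fin n} (hvi : v i = 1) (hwi : w i = 1) :
    admissiblePairs v w =
      admissiblePairs (Function.update v i 0) w ∪ admissiblePairs v (Function.update w i 0) := by
  ext p
  simp only [Finset.mem_union, mem_admissiblePairs]
  constructor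
  · intro hp
    by_cases h0 : (p.1 i : ℕ) = 0
    · refine Or.inl fun j => ?_
      rcases eq_or_ne j i with rfl | hji
      · simpa [h0] using hp j
      · simpa [hji] using hp j
    · refine Or.inr fun j => ?_
      rcases eq_or_ne j i with rfl | hji
      · have := hp j
        simp only [Function.update_self]
        omega
      · simpa [hji] using hp j
  · rintro (hp | hp) j <;> rcases eq_or_ne j i with rfl | hji
    · have := hp j
      simp only [Function.update_self] at this
      omega
    · simpa [hji] using hp j
    · have := hp j
      simp only [Function.update_self] at this
      omega
    · simpa [hji] using hp j

theorem disjoint_admissiblePairs_update {v w : Coord n} (i : Fin n) :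
    Disjoint (admissiblePairs (Function.update v i 0) w)
      (admissiblePairs v (Function.update w i 0)) :=
  Finset.disjoint_left.2 fun p hp hq => by
    have h1 := mem_admissiblePairs.1 hp i
    have h2 := mem_admissiblePairs.1 hq i
    simp only [Function.update_self] at h1 h2
    omega

end AdmissiblePairs

theorem Finset.sum_update_zero_lt {ι : Type*} [Fintype ι] [DecidableEq ι] {f : ι → ℕ} {i : ι}
    (hi : f i ≠ 0) : ∑ j, Function.update f i 0 j < ∑ j, f j := by
  refine Finset.sum_lt_sum (fun j _ => ?_) ⟨i, Finset.mem_univ i, by simp; omega⟩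
  rcases eq_or_ne j i with rfl | hji
  · simp
  · simp [hji]

theorem prodClass_eq_sum {n : ℕ} (v w : Coord n) (hv : ∀ j, v j ≤ 1) (hw : ∀ j, w j ≤ 1) :
    prodClass v w =
      ∑ p ∈ admissiblePairs v w, prodClass (fun j => (p.1 j : ℕ)) (fun j => (p.2 j : ℕ)) := by
  by_cases hzero : ∃ i, v i = 0 ∧ w i = 0
  · obtain ⟨i, hvi, hwi⟩ := hzero
    rw [prodClass_eq_zero hvi hwi hv hw, admissiblePairs_eq_empty hvi hwi, Finset.sum_empty]
  by_cases hone : ∃ i, v i = 1 ∧ w i = 1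
  · obtain ⟨i, hvi, hwi⟩ := hone
    have hv' : ∀ j, Function.update v i 0 j ≤ 1 := fun j => by
      rcases eq_or_ne j i with rfl | hji <;> simp [*]
    have hw' : ∀ j, Function.update w i 0 j ≤ 1 := fun j => by
      rcases eq_or_ne j i with rfl | hji <;> simp [*]
    rw [prodClass_split hvi hwi hv hw, admissiblePairs_split hvi hwi,
      Finset.sum_union (disjoint_admissiblePairs_update i),
      prodClass_eq_sum (Function.update v i 0) w hv' hw,
      prodClass_eq_sum v (Function.update w i 0) hv hw']
  simp only [not_exists, not_and] at hzero hone
  have hsum : ∀ j, v j + w j = 1 := fun j => by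
    have := hv j; have := hw j; have := hzero j; have := hone j
    omega
  rw [admissiblePairs_eq_singleton hsum, Finset.sum_singleton]
termination_by ∑ j, v j + ∑ j, w j
decreasing_by
  · have := Finset.sum_update_zero_lt (f := v) (i := i) (by omega); omega
  · have := Finset.sum_update_zero_lt (f := w) (i := i) (by omega); omega

theorem product_moving_relation (n : ℕ) (v w : Coord n)
    (hv : ∀ j, v j ≤ 1) (hw : ∀ j, w j ≤ 1) (x y : Polynomial ℚ) :
    Homologous (elem v x * elem w y)
      (∑ p ∈ Finset.univ.filter
          (fun p : (Fin n → Fin 2) × (Fin n → Fin 2) =>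
            (∀ j, (p.1 j : ℕ) ≤ v j) ∧ (∀ j, (p.2 j : ℕ) ≤ w j) ∧
            ∀ j, (p.1 j : ℕ) + (p.2 j : ℕ) = 1),
        elem (fun j => (p.1 j : ℕ)) x * elem (fun j => (p.2 j : ℕ)) y) := by
  have h := LinearMap.congr_fun₂ (prodClass_eq_sum v w hv hw) x y
  simp only [LinearMap.sum_apply, prodClass_apply, ← map_sum] at h
  exact (Submodule.Quotient.eq _).1 h
end
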